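/- arXiv:0904.2486 — 2 statements merged into one kernel-verified Lean document; each statement's English description precedes it below -/
import Mathlib

section
/- Let A and B be categories with pullbacks, F, G, H : A → B pullback-preserving functors, and t : F ⟹ H, u : G ⟹ H cartesian natural transformations. Then the pointwise pullback functor P of t and u preserves pullbacks. -/
open CategoryTheory CategoryTheory.Limits

universe w₁ w₂ v₁ v₂ v₃ u₁ u₂ u₃

/-- A functor preserves pullbacks if it sends pullback squares to pullback squares. -/
def PreservesPB {A : Type u₁} {B : Type u₂} [Category.{v₁} A] [Category.{v₂} B]
    (F : A ⥤ B) : Prop :=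
  ∀ {W X Y Z : A} (fst : W ⟶ X) (snd : W ⟶ Y) (f : X ⟶ Z) (g : Y ⟶ Z),
    IsPullback fst snd f g → IsPullback (F.map fst) (F.map snd) (F.map f) (F.map g)

/-- A natural transformation is cartesian if all its naturality squares are pullbacks. -/
def Cartesian {A : Type u₁} {B : Type u₂} [Category.{v₁} A] [Category.{v₂} B]
    {F G : A ⥤ B} (r : F ⟶ G) : Prop :=
  ∀ {a b : A} (α : a ⟶ b), IsPullback (F.map α) (r.app a) (r.app b) (G.map α)

section

variable {A : Type u₁} {B : Type u₂} [Category.{v₁} A] [Category.{v₂} B]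

/-- The pullback square at `a` pasted onto the naturality square of `u` at `α` is also the
naturality square of `r` at `α` pasted onto the pullback square at `b`, which cancels. -/
theorem cartesian_fst_of_isPullback_app {F G H P : A ⥤ B} {t : F ⟶ H} {u : G ⟶ H}
    (hu : Cartesian u) {r : P ⟶ F} {s : P ⟶ G}
    (hpt : ∀ a : A, IsPullback (r.app a) (s.app a) (t.app a) (u.app a)) :
    Cartesian r := by
  intro a b α
  have outer : IsPullback (r.app a) (s.app a ≫ G.map α) (t.app a ≫ H.map α) (u.app b) :=
    (hpt a).paste_vert (hu α).flip
  rw [← s.naturality, ← t.naturality] at outer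
  exact (outer.of_bot (r.naturality α).symm (hpt b)).flip

/-- The naturality square of `r` at `snd` pasted with the `F`-image of the square is also
the `P`-image pasted with the naturality square of `r` at `f`, which cancels. -/
theorem PreservesPB.of_cartesian {F P : A ⥤ B} (hF : PreservesPB F) {r : P ⟶ F}
    (hr : Cartesian r) : PreservesPB P := by
  intro W X Y Z fst snd f g hsq
  have outer : IsPullback (r.app W ≫ F.map fst) (P.map snd) (F.map f) (r.app Y ≫ F.map g) :=
    (hr snd).flip.paste_horiz (hF fst snd f g hsq)
  rw [← r.naturality, ← r.naturality] at outer
  exact outer.of_right (by rw [← P.map_comp, ← P.map_comp, hsq.w]) (hr f).flip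

end

theorem stmt_6_general {A : Type u₁} {B : Type u₂} [Category.{v₁} A] [Category.{v₂} B]
    {F G H P : A ⥤ B}
    (hF : PreservesPB F)
    (t : F ⟶ H) (u : G ⟶ H) (hu : Cartesian u)
    (r : P ⟶ F) (s : P ⟶ G)
    (hpt : ∀ a : A, IsPullback (r.app a) (s.app a) (t.app a) (u.app a)) :
    PreservesPB P :=
  hF.of_cartesian (cartesian_fst_of_isPullback_app hu hpt)

/-- The pointwise pullback of cartesian natural transformations between
pullback-preserving functors preserves pullbacks. -/
theorem stmt_6 {A : Type u₁} {B : Type u₂} [Category.{v₁} A] [Category.{v₂} B]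
    [HasPullbacks A] [HasPullbacks B] {F G H P : A ⥤ B}
    (hF : PreservesPB F) (hG : PreservesPB G) (hH : PreservesPB H)
    (t : F ⟶ H) (u : G ⟶ H) (ht : Cartesian t) (hu : Cartesian u)
    (r : P ⟶ F) (s : P ⟶ G)
    (hpt : ∀ a : A, IsPullback (r.app a) (s.app a) (t.app a) (u.app a)) :
    PreservesPB P :=
  stmt_6_general hF t u hu r s hpt
end

section
/- Let A, B be categories with pullbacks. The evaluation functor ev : [A,B]_pb × A → B, sending (F, a) to F a, preserves pullbacks, where [A,B]_pb is the category of pullback-preserving functors A → B and cartesian natural transformations. -/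
open CategoryTheory CategoryTheory.Limits

universe w₁ w₂ v₁ v₂ v₃ u₁ u₂ u₃

/-- The category of pullback-preserving functors `A ⥤ B` and cartesian natural
transformations. -/
structure PBFunctor (A : Type u₁) (B : Type u₂) [Category.{v₁} A] [Category.{v₂} B] where
  obj : A ⥤ B
  preserves : PreservesPB obj

instance PBFunctor.category {A : Type u₁} {B : Type u₂} [Category.{v₁} A] [Category.{v₂} B] :
    Category (PBFunctor A B) where
  Hom F G := { r : F.obj ⟶ G.obj // Cartesian r }
  id F := ⟨𝟙 F.obj, fun α => by
    simp only [NatTrans.id_app]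
    exact IsPullback.of_vert_isIso ⟨by simp⟩⟩
  comp {F G H} r s := ⟨r.1 ≫ s.1, fun α => by
    simpa using (r.2 α).paste_vert (s.2 α)⟩
  id_comp f := by apply Subtype.ext; simp
  comp_id f := by apply Subtype.ext; simp
  assoc f g h := by apply Subtype.ext; simp

@[simp] lemma PBFunctor.id_val {A : Type u₁} {B : Type u₂} [Category.{v₁} A]
    [Category.{v₂} B] (F : PBFunctor A B) : (𝟙 F : F ⟶ F).1 = 𝟙 F.obj := rfl

@[simp] lemma PBFunctor.comp_val {A : Type u₁} {B : Type u₂} [Category.{v₁} A]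
    [Category.{v₂} B] {F G H : PBFunctor A B} (r : F ⟶ G) (s : G ⟶ H) :
    (r ≫ s : F ⟶ H).1 = r.1 ≫ s.1 := rfl
/-- The evaluation functor `[A,B]_pb × A ⥤ B`, sending `(F, a)` to `F a`. -/
def evPB (A : Type u₁) (B : Type u₂) [Category.{v₁} A] [Category.{v₂} B] :
    (PBFunctor A B) × A ⥤ B where
  obj p := p.1.obj.obj p.2
  map {p q} f := f.1.1.app p.2 ≫ q.1.obj.map f.2
  map_id p := by simp
  map_comp {p q m} f g := by
    simp [NatTrans.naturality_assoc]

/-!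
Pullbacks in `[A,B]_pb × A` are computed componentwise, and pullbacks in `[A,B]_pb` pointwise:
for cartesian `t : F ⟶ H` and `u : G ⟶ H` the pointwise pullback `Q` has cartesian projections
(paste the pullback square of `Q` at `a` with the naturality square of `u`), and a functor with a
cartesian transformation into a pullback-preserving functor preserves pullbacks itself.
Evaluation then sends a pullback square `(P, a), (F, b), (G, c), (H, d)` to the outer rectangle
of a `2 × 2` grid of pullbacks: `P a, F a, G a, H a` (pointwise), the naturality squares of
the cartesian `F ⟶ H` at `a ⟶ b` and `G ⟶ H` at `a ⟶ c`, and the image under `H` of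
`a, b, c, d`.
-/

namespace CategoryTheory.IsPullback

variable {C : Type u₁} {D : Type u₂} [Category.{v₁} C] [Category.{v₂} D]
  {W X Y Z : C × D} {fst : W ⟶ X} {snd : W ⟶ Y} {f : X ⟶ Z} {g : Y ⟶ Z}

lemma prod_fst (h : IsPullback fst snd f g) : IsPullback fst.1 snd.1 f.1 g.1 := by
  have w₁ : fst.1 ≫ f.1 = snd.1 ≫ g.1 := congrArg (·.1) h.w
  have w₂ : fst.2 ≫ f.2 = snd.2 ≫ g.2 := congrArg (·.2) h.w
  -- a cone over the first components becomes a cone in `C × D` with vertex `(s.pt, W.2)`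
  let lift (s : PullbackCone f.1 g.1) : (s.pt, W.2) ⟶ W :=
    h.lift (s.fst, fst.2) (s.snd, snd.2) (Prod.ext s.condition w₂)
  refine ⟨⟨w₁⟩, ⟨PullbackCone.IsLimit.mk w₁ (fun s => (lift s).1)
    (fun s => congrArg (·.1) (h.lift_fst _ _ _ : lift s ≫ fst = _))
    (fun s => congrArg (·.1) (h.lift_snd _ _ _ : lift s ≫ snd = _))
    (fun s m hm₁ hm₂ => congrArg (·.1) <|
      h.hom_ext (W := (s.pt, W.2)) (k := (m, 𝟙 W.2)) (l := lift s) ?_ ?_)⟩⟩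
  · exact (h.lift_fst _ _ _).trans (Prod.ext hm₁.symm (Category.id_comp _).symm) |>.symm
  · exact (h.lift_snd _ _ _).trans (Prod.ext hm₂.symm (Category.id_comp _).symm) |>.symm

lemma prod_snd (h : IsPullback fst snd f g) : IsPullback fst.2 snd.2 f.2 g.2 :=
  (h.map (Prod.swap C D)).prod_fst

end CategoryTheory.IsPullback

section Cartesian

variable {A : Type u₁} {B : Type u₂} [Category.{v₁} A] [Category.{v₂} B]

lemma Cartesian.of_comp {T Q F : A ⥤ B} {ℓ : T ⟶ Q} {p : Q ⟶ F} (h : Cartesian (ℓ ≫ p))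
    (hp : Cartesian p) : Cartesian ℓ := fun α =>
  IsPullback.of_bot (h α) (ℓ.naturality α) (hp α)

lemma Cartesian.preservesPB {Q F : A ⥤ B} {r : Q ⟶ F} (hr : Cartesian r) (hF : PreservesPB F) :
    PreservesPB Q := by
  intro W X Y Z fst snd f g h
  refine IsPullback.of_right ?_ (by simp only [← Functor.map_comp, h.w]) (hr f).flip
  rw [r.naturality, r.naturality]
  exact (hr snd).flip.paste_horiz (hF _ _ _ _ h)

lemma Cartesian.of_isPullback_app {Q F G H : A ⥤ B} {p : Q ⟶ F} {q : Q ⟶ G} {t : F ⟶ H}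
    {u : G ⟶ H} (hsq : ∀ a, IsPullback (p.app a) (q.app a) (t.app a) (u.app a))
    (hu : Cartesian u) : Cartesian p := fun {a b} α => by
  refine IsPullback.of_right ?_ (p.naturality α) (hsq b).flip
  rw [q.naturality, t.naturality]
  exact (hsq a).flip.paste_horiz (hu α)

end Cartesian

namespace PBFunctor

def forget (A : Type u₁) (B : Type u₂) [Category.{v₁} A] [Category.{v₂} B] :
    PBFunctor A B ⥤ (A ⥤ B) where
  obj F := F.obj
  map r := r.1

variable {A : Type u₁} {B : Type u₂} [Category.{v₁} A] [Category.{v₂} B] [HasPullbacks B]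
  {F G H : PBFunctor A B} (t : F ⟶ H) (u : G ⟶ H)

lemma cartesian_pullback_fst : Cartesian (pullback.fst t.1 u.1) :=
  Cartesian.of_isPullback_app ((IsPullback.of_hasPullback t.1 u.1).app) u.2

lemma cartesian_pullback_snd : Cartesian (pullback.snd t.1 u.1) :=
  Cartesian.of_isPullback_app (fun a => ((IsPullback.of_hasPullback t.1 u.1).app a).flip) t.2

noncomputable def pullbackObj : PBFunctor A B :=
  ⟨pullback t.1 u.1, Cartesian.preservesPB (cartesian_pullback_fst t u) F.preserves⟩

noncomputable def pullbackFst : pullbackObj t u ⟶ F :=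
  ⟨pullback.fst t.1 u.1, cartesian_pullback_fst t u⟩

noncomputable def pullbackSnd : pullbackObj t u ⟶ G :=
  ⟨pullback.snd t.1 u.1, cartesian_pullback_snd t u⟩

lemma isPullback_pullbackObj : IsPullback (pullbackFst t u) (pullbackSnd t u) t u := by
  have w : pullbackFst t u ≫ t = pullbackSnd t u ≫ u := Subtype.ext pullback.condition
  refine ⟨⟨w⟩, ⟨PullbackCone.IsLimit.mk w
    (fun s => ⟨pullback.lift s.fst.1 s.snd.1 (congrArg Subtype.val s.condition),
      Cartesian.of_comp (by rw [pullback.lift_fst]; exact s.fst.2) (cartesian_pullback_fst t u)⟩)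
    (fun s => Subtype.ext (pullback.lift_fst _ _ _))
    (fun s => Subtype.ext (pullback.lift_snd _ _ _))
    (fun s m hm₁ hm₂ => Subtype.ext (pullback.hom_ext ?_ ?_))⟩⟩
  · exact (congrArg Subtype.val hm₁).trans (pullback.lift_fst _ _ _).symm
  · exact (congrArg Subtype.val hm₂).trans (pullback.lift_snd _ _ _).symm

instance : PreservesLimit (cospan t u) (forget A B) :=
  (isPullback_pullbackObj t u).preservesLimit_cospan_iff.2 (IsPullback.of_hasPullback t.1 u.1)

lemma isPullback_app {P : PBFunctor A B} {r : P ⟶ F} {s : P ⟶ G} (h : IsPullback r s t u)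
    (a : A) : IsPullback (r.1.app a) (s.1.app a) (t.1.app a) (u.1.app a) :=
  (h.map (forget A B)).app a

end PBFunctor

theorem stmt_9_general (A : Type u₁) (B : Type u₂) [Category.{v₁} A] [Category.{v₂} B]
    [HasPullbacks B] :
    PreservesPB (evPB A B) := by
  intro W X Y Z fst snd f g h
  have pointwise := PBFunctor.isPullback_app f.1 g.1 h.prod_fst W.2
  have top := pointwise.paste_horiz (f.1.2 fst.2)
  have bot := (g.1.2 snd.2).flip.paste_horiz (Z.1.preserves _ _ _ _ h.prod_snd)
  exact top.paste_vert bot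

/-- The evaluation functor `[A,B]_pb × A ⥤ B` preserves pullbacks. -/
theorem stmt_9 (A : Type u₁) (B : Type u₂) [Category.{v₁} A] [Category.{v₂} B]
    [HasPullbacks A] [HasPullbacks B] :
    PreservesPB (evPB A B) :=
  stmt_9_general A B
end
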